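/- Let $S^0$ be the semigroup $\mathscr{S}_n\ltimes(\mathbb{N}\times\mathbb{N})^n$ with adjoined zero, equipped with a Hausdorff locally compact non-discrete topology making multiplication separately continuous. Then for every open neighbourhood $U$ of $0$ the complement $S^0\setminus U$ is finite. -/

import Mathlib

/-!
By Baire's theorem some point of the countable open set `S = S⁰ \ {0}` is isolated, and since any
element of `S` is carried onto any other by a two-sided translation with finite fibres, every point
of `S` is isolated; by non-discreteness `0` is not. Fix a compact neighbourhood `K` of `0` and let
`T ⊆ S` be the trace of `U ∩ interior K`. It is infinite, and by separate continuity each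
translation moves only finitely many points of `T` out of `T`, because those points form a compact
set of isolated points. For a fixed permutation, translations by the generators of the bicyclic
factors realise the unit steps of the grid `ℕ+ⁿ × ℕ+ⁿ`, so `T` contains each grid outside a finite
box. Hence `Tᶜ`, and with it `Uᶜ`, is finite.
-/

/-- Elements of the semigroup `S = 𝒮ₙ ⋉ (ℕ × ℕ)ⁿ`: a permutation of
`{1,…,n}` together with a pair of tuples of positive integers. -/
abbrev Gel (n : ℕ) := Equiv.Perm (Fin n) × (Fin n → ℕ+) × (Fin n → ℕ+)

/-- The right action of a permutation on tuples: `((x)σ)_i = x_{σ⁻¹(i)}`. -/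
def ract {n : ℕ} (σ : Equiv.Perm (Fin n)) (x : Fin n → ℕ+) : Fin n → ℕ+ :=
  fun i => x (σ.symm i)

/-- The semidirect product operation
`(α,[x,y])·(β,[u,v]) = (α∘β, [(x)β + max{(y)β,u} - (y)β, v + max{(y)β,u} - u])`,
where `α∘β` is the composition of the permutations acting on the right
(first `α`, then `β`) and max and subtraction are coordinatewise. -/
def gmul {n : ℕ} (a b : Gel n) : Gel n :=
  (b.1 * a.1,
   fun i => ract b.1 a.2.1 i + max (ract b.1 a.2.2 i) (b.2.1 i) - ract b.1 a.2.2 i,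
   fun i => b.2.2 i + max (ract b.1 a.2.2 i) (b.2.1 i) - b.2.1 i)

/-- The semigroup with adjoined zero: `none` is the zero. -/
def gmul0 {n : ℕ} : Option (Gel n) → Option (Gel n) → Option (Gel n)
  | some a, some b => some (gmul a b)
  | _, _ => none

section CovBy

variable {α : Type*} [SemilatticeSup α] [OrderBot α] [LocallyFiniteOrder α]

/-- Outside `Iic m`, for an upper bound `m` of `F`, membership in `A` propagates along covers, and
any two points there are joined through their supremum by chains of covers that stay outside. -/
theorem Set.Infinite.compl_finite_of_covBy {A F : Set α} (hA : A.Infinite) (hF : F.Finite)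
    (hcov : ∀ t ∈ A, t ∉ F → ∀ s, t ⋖ s ∨ s ⋖ t → s ∈ A) : Aᶜ.Finite := by
  obtain ⟨m, hm⟩ := hF.bddAbove
  have hF_le {t : α} (ht : ¬t ≤ m) : t ∉ F := fun htF => ht (hm htF)
  obtain ⟨t₀, ht₀, ht₀m⟩ : ∃ t ∈ A, ¬t ≤ m := by
    by_contra! h
    exact hA ((Set.finite_Iic m).subset h)
  have up {b : α} (hb : Relation.ReflTransGen (· ⋖ ·) t₀ b) : b ∈ A := by
    induction hb with
    | refl => exact ht₀
    | tail hc hcb ih =>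
      exact hcov _ ih (hF_le fun h => ht₀m ((le_iff_reflTransGen_covBy.2 hc).trans h)) _
        (Or.inl hcb)
  have down {p b : α} (hb : b ∈ A) (hpb : Relation.ReflTransGen (· ⋖ ·) p b) (hp : ¬p ≤ m) :
      p ∈ A := by
    induction hpb using Relation.ReflTransGen.head_induction_on with
    | refl => exact hb
    | head hpc hcb ih =>
      have hc : ¬_ ≤ m := fun h => hp (hpc.le.trans h)
      exact hcov _ (ih hc) (hF_le hc) _ (Or.inr hpc)
  refine (Set.finite_Iic m).subset fun p hpA => ?_
  by_contra hp
  exact hpA (down (up (le_iff_reflTransGen_covBy.1 le_sup_left))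
    (le_iff_reflTransGen_covBy.1 le_sup_right) hp)

end CovBy

section Topology

variable {X : Type*} [TopologicalSpace X]

lemma IsOpen.exists_isOpen_singleton_of_countable [T2Space X] [LocallyCompactSpace X]
    {s : Set X} (hs : IsOpen s) (hc : s.Countable) (hne : s.Nonempty) :
    ∃ x ∈ s, IsOpen ({x} : Set X) := by
  have := hs.locallyCompactSpace
  have := hc.to_subtype
  have := hne.to_subtype
  have := BaireSpace.of_t2Space_locallyCompactSpace (X := s)
  obtain ⟨x, y, hy⟩ := nonempty_interior_of_iUnion_of_closed (f := fun x : s => {x})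
    (fun _ => isClosed_singleton) (Set.iUnion_of_singleton s)
  obtain rfl : y = x := Set.mem_singleton_iff.1 (interior_subset hy)
  have hx : IsOpen ({y} : Set s) :=
    (interior_eq_iff_isOpen.1 (subset_antisymm interior_subset (Set.singleton_subset_iff.2 hy)))
  exact ⟨y, y.2, by simpa using hs.isOpenMap_subtype_val _ hx⟩

lemma isOpen_singleton_of_finite_preimage [T1Space X] {Y : Type*} [TopologicalSpace Y]
    {f : X → Y} (hf : Continuous f) {x : X} (hfx : IsOpen ({f x} : Set Y))
    (hfin : (f ⁻¹' {f x}).Finite) : IsOpen ({x} : Set X) :=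
  isOpen_singleton_of_finite_mem_nhds x ((hfx.preimage hf).mem_nhds rfl) hfin

lemma IsCompact.finite_of_forall_ne_isOpen_singleton {z : X}
    (hiso : ∀ x, x ≠ z → IsOpen ({x} : Set X)) {K : Set X} (hK : IsCompact K) (hz : z ∉ K) :
    K.Finite :=
  hK.finite <| isDiscrete_iff_forall_mem_exists_isOpen.2 fun y hy =>
    ⟨{y}, hiso y (ne_of_mem_of_not_mem hy hz), by simp [hy]⟩

end Topology

lemma Set.finite_of_forall_finite_preimage_mk {α β : Type*} [Finite α] {S : Set (α × β)}
    (h : ∀ a, (Prod.mk a ⁻¹' S).Finite) : S.Finite :=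
  (Set.finite_iUnion fun a => (h a).image (Prod.mk a)).subset fun t ht =>
    Set.mem_iUnion.2 ⟨t.1, t.2, ht, rfl⟩

lemma PNat.coe_max (a b : ℕ+) : ((max a b : ℕ+) : ℕ) = max (a : ℕ) b :=
  Monotone.map_max fun _ _ => (PNat.coe_le_coe _ _).2

lemma PNat.coe_add_sub_of_le (a : ℕ+) {b c : ℕ+} (h : b ≤ c) :
    ((a + c - b : ℕ+) : ℕ) = a + c - b := by
  rw [PNat.sub_coe, if_pos (h.trans_lt (PNat.lt_add_left c a)), PNat.add_coe]

variable {n : ℕ}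

lemma ract_apply (σ : Equiv.Perm (Fin n)) (x : Fin n → ℕ+) (i : Fin n) :
    ract σ x i = x (σ.symm i) := rfl

@[simp]
lemma ract_one (x : Fin n → ℕ+) : ract 1 x = x := rfl

/-- Coordinatewise this is the product of the bicyclic monoid; the `ℕ+` subtractions in `gmul`
never truncate. -/
lemma coe_gmul_snd_fst (a b : Gel n) (i : Fin n) :
    ((gmul a b).2.1 i : ℕ) =
      ract b.1 a.2.1 i + max (ract b.1 a.2.2 i : ℕ) (b.2.1 i) - ract b.1 a.2.2 i := by
  rw [gmul, PNat.coe_add_sub_of_le _ (le_max_left _ _), PNat.coe_max]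

lemma coe_gmul_snd_snd (a b : Gel n) (i : Fin n) :
    ((gmul a b).2.2 i : ℕ) = b.2.2 i + max (ract b.1 a.2.2 i : ℕ) (b.2.1 i) - b.2.1 i := by
  rw [gmul, PNat.coe_add_sub_of_le _ (le_max_right _ _), PNat.coe_max]

lemma gel_ext {a b : Gel n} (h₁ : a.1 = b.1) (h₂ : ∀ i, (a.2.1 i : ℕ) = b.2.1 i)
    (h₃ : ∀ i, (a.2.2 i : ℕ) = b.2.2 i) : a = b :=
  Prod.ext h₁ (Prod.ext (funext fun i => PNat.eq (h₂ i)) (funext fun i => PNat.eq (h₃ i)))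

lemma gmul_mk_one_one (δ : Equiv.Perm (Fin n)) (b : Gel n) :
    gmul (δ, 1, 1) b = (b.1 * δ, b.2) := by
  refine gel_ext rfl (fun i => ?_) (fun i => ?_) <;>
  simp [coe_gmul_snd_fst, coe_gmul_snd_snd, ract_apply] <;> grind [PNat.pos]

section Moves
variable (β : Equiv.Perm (Fin n)) (u v : Fin n → ℕ+) (j : Fin n)

lemma gmul_mulSingle_left_up :
    gmul (1, Pi.mulSingle (β.symm j) 2, 1) (β, u, v) = (β, Function.update u j (u j + 1), v) := by
  refine gel_ext (mul_one β) (fun i => ?_) (fun i => ?_) <;>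
  rcases eq_or_ne i j with rfl | h <;>
  simp [coe_gmul_snd_fst, coe_gmul_snd_snd, ract_apply, *] <;> grind [PNat.pos]

lemma gmul_mulSingle_left_down :
    gmul (1, 1, Pi.mulSingle (β.symm j) 2) (β, Function.update u j (u j + 1), v) = (β, u, v) := by
  refine gel_ext (mul_one β) (fun i => ?_) (fun i => ?_) <;>
  rcases eq_or_ne i j with rfl | h <;>
  simp [coe_gmul_snd_fst, coe_gmul_snd_snd, ract_apply, *] <;> grind [PNat.pos]

lemma gmul_mulSingle_right_up :
    gmul (β, u, v) (1, 1, Pi.mulSingle j 2) = (β, u, Function.update v j (v j + 1)) := by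
  refine gel_ext (one_mul β) (fun i => ?_) (fun i => ?_) <;>
  rcases eq_or_ne i j with rfl | h <;>
  simp [coe_gmul_snd_fst, coe_gmul_snd_snd, *] <;> grind [PNat.pos]

lemma gmul_mulSingle_right_down :
    gmul (β, u, Function.update v j (v j + 1)) (1, Pi.mulSingle j 2, 1) = (β, u, v) := by
  refine gel_ext (one_mul β) (fun i => ?_) (fun i => ?_) <;>
  rcases eq_or_ne i j with rfl | h <;>
  simp [coe_gmul_snd_fst, coe_gmul_snd_snd, *] <;> grind [PNat.pos]

end Moves

lemma gmul_inv_ract_one (β : Equiv.Perm (Fin n)) (u v : Fin n → ℕ+) :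
    gmul (β, u, v) (β⁻¹, ract β⁻¹ v, 1) = (1, ract β⁻¹ u, 1) := by
  refine gel_ext (inv_mul_cancel β) (fun i => ?_) (fun i => ?_) <;>
  simp [coe_gmul_snd_fst, coe_gmul_snd_snd]

lemma gmul_mk_add_sub_one (γ : Equiv.Perm (Fin n)) (s r u : Fin n → ℕ+) :
    gmul (γ, s, u + r - 1) (1, u, 1) = (γ, s, r) := by
  have hcoe (i : Fin n) : ((u i + r i - 1 : ℕ+) : ℕ) = u i + r i - 1 :=
    PNat.coe_add_sub_of_le _ one_le
  refine gel_ext (one_mul γ) (fun i => ?_) (fun i => ?_) <;>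
  simp [coe_gmul_snd_fst, coe_gmul_snd_snd, hcoe] <;> grind [PNat.pos]

lemma exists_gmul_gmul_eq (c d : Gel n) : ∃ a b, gmul a (gmul d b) = c :=
  ⟨(c.1, c.2.1, ract d.1⁻¹ d.2.1 + c.2.2 - 1), (d.1⁻¹, ract d.1⁻¹ d.2.2, 1), by
    rw [gmul_inv_ract_one, gmul_mk_add_sub_one]⟩

lemma finite_setOf_gmul_left_eq (a c : Gel n) : {x | gmul a x = c}.Finite := by
  classical
  refine ((Set.finite_singleton (c.1 * a.1⁻¹)).prod
    (Set.finite_Iic (c.2.1 + ract (c.1 * a.1⁻¹) a.2.2, c.2.2))).subset ?_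
  rintro x rfl
  have hx : x.1 = (gmul a x).1 * a.1⁻¹ := (mul_inv_cancel_right _ _).symm
  refine ⟨hx, fun i => ?_, fun i => ?_⟩ <;> dsimp only [Pi.add_apply]
  · have := (ract x.1 a.2.1 i).pos
    have := coe_gmul_snd_fst a x i
    rw [← hx, ← PNat.coe_le_coe, PNat.add_coe]
    omega
  · have := coe_gmul_snd_snd a x i
    rw [← PNat.coe_le_coe]
    omega

lemma finite_setOf_gmul_right_eq (a c : Gel n) : {x | gmul x a = c}.Finite := by
  classical
  refine ((Set.finite_singleton (a.1⁻¹ * c.1)).prod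
    (Set.finite_Iic (fun k => c.2.1 (a.1 k), fun k => c.2.2 (a.1 k) + a.2.1 (a.1 k)))).subset ?_
  rintro x rfl
  refine ⟨(inv_mul_cancel_left _ _).symm, fun k => ?_, fun k => ?_⟩ <;> dsimp only
  · have := coe_gmul_snd_fst x a (a.1 k)
    simp only [ract_apply, Equiv.symm_apply_apply] at this
    rw [← PNat.coe_le_coe]
    omega
  · have := (x.2.1 k).pos
    have := coe_gmul_snd_snd x a (a.1 k)
    simp only [ract_apply, Equiv.symm_apply_apply] at this
    rw [← PNat.coe_le_coe, PNat.add_coe]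
    omega

def IsAlmostInvariant (T : Set (Gel n)) : Prop :=
  ∀ a, {t | t ∈ T ∧ gmul a t ∉ T}.Finite ∧ {t | t ∈ T ∧ gmul t a ∉ T}.Finite

def unitShifts (n : ℕ) : Set (Gel n) :=
  ⋃ j, {(1, Pi.mulSingle j 2, 1), (1, 1, Pi.mulSingle j 2)}

lemma finite_unitShifts : (unitShifts n).Finite :=
  Set.finite_iUnion fun _ => Set.toFinite _

lemma exists_mem_unitShifts_of_covBy (β : Equiv.Perm (Fin n))
    {p q : (Fin n → ℕ+) × (Fin n → ℕ+)} (h : p ⋖ q ∨ q ⋖ p) :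
    ∃ a ∈ unitShifts n, gmul a (β, p) = (β, q) ∨ gmul (β, p) a = (β, q) := by
  classical
  obtain ⟨u, v⟩ := p
  obtain ⟨u', v'⟩ := q
  simp only [Prod.mk_covBy_mk_iff, Pi.covBy_iff_exists_right_eq, Order.covBy_iff_add_one_eq] at h
  rcases h with (⟨⟨j, _, rfl, rfl⟩, rfl⟩ | ⟨⟨j, _, rfl, rfl⟩, rfl⟩) |
    (⟨⟨j, _, rfl, rfl⟩, rfl⟩ | ⟨⟨j, _, rfl, rfl⟩, rfl⟩)
  · exact ⟨_, Set.mem_iUnion.2 ⟨β.symm j, by simp⟩, Or.inl (gmul_mulSingle_left_up ..)⟩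
  · exact ⟨_, Set.mem_iUnion.2 ⟨j, by simp⟩, Or.inr (gmul_mulSingle_right_up ..)⟩
  · exact ⟨_, Set.mem_iUnion.2 ⟨β.symm j, by simp⟩, Or.inl (gmul_mulSingle_left_down ..)⟩
  · exact ⟨_, Set.mem_iUnion.2 ⟨j, by simp⟩, Or.inr (gmul_mulSingle_right_down ..)⟩

namespace IsAlmostInvariant

variable {T : Set (Gel n)}

lemma compl_slice_finite (hT : IsAlmostInvariant T) {β : Equiv.Perm (Fin n)}
    (hβ : (Prod.mk β ⁻¹' T).Infinite) : (Prod.mk β ⁻¹' T)ᶜ.Finite := by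
  classical
  refine hβ.compl_finite_of_covBy ((finite_unitShifts.biUnion fun a _ =>
    (hT a).1.union (hT a).2).preimage (Prod.mk_right_injective β).injOn) ?_
  intro p hp hpF q hpq
  by_contra hq
  obtain ⟨a, ha, h | h⟩ := exists_mem_unitShifts_of_covBy β hpq
  · exact hpF (Set.mem_biUnion ha (Or.inl ⟨hp, h ▸ hq⟩))
  · exact hpF (Set.mem_biUnion ha (Or.inr ⟨hp, h ▸ hq⟩))

lemma slice_infinite (hT : IsAlmostInvariant T) {β : Equiv.Perm (Fin n)}
    (hβ : (Prod.mk β ⁻¹' T).Infinite) (γ : Equiv.Perm (Fin n)) :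
    (Prod.mk γ ⁻¹' T).Infinite := by
  refine (hβ.sdiff ((hT (β⁻¹ * γ, 1, 1)).1.preimage (Prod.mk_right_injective β).injOn)).mono ?_
  rintro p ⟨hp, hpγ⟩
  by_contra hq
  refine hpγ ⟨hp, ?_⟩
  rwa [gmul_mk_one_one, mul_inv_cancel_left]

theorem compl_finite (hT : IsAlmostInvariant T) (hinf : T.Infinite) : Tᶜ.Finite := by
  obtain ⟨β, hβ⟩ : ∃ β, (Prod.mk β ⁻¹' T).Infinite := by
    by_contra! h
    exact hinf (Set.finite_of_forall_finite_preimage_mk h)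
  exact Set.finite_of_forall_finite_preimage_mk fun γ =>
    hT.compl_slice_finite (hT.slice_infinite hβ γ)

end IsAlmostInvariant

lemma gmul0_none_right (x : Option (Gel n)) : gmul0 x none = none := by
  cases x <;> rfl

section SemitopologicalZero

variable [TopologicalSpace (Option (Gel n))]

lemma isOpen_singleton_of_ne_none [T2Space (Option (Gel n))]
    [LocallyCompactSpace (Option (Gel n))]
    (hsep : ∀ a : Option (Gel n),
      Continuous (fun x => gmul0 a x) ∧ Continuous (fun x => gmul0 x a))
    {x : Option (Gel n)} (hx : x ≠ none) : IsOpen {x} := by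
  obtain ⟨d, rfl⟩ := Option.ne_none_iff_exists'.1 hx
  have hrange : IsOpen (Set.range (some : Gel n → Option (Gel n))) := by
    rw [(Set.isCompl_range_some_none _).eq_compl]
    exact isOpen_compl_singleton
  obtain ⟨_, ⟨c, rfl⟩, hc⟩ :=
    hrange.exists_isOpen_singleton_of_countable (Set.countable_range _) (Set.range_nonempty _)
  obtain ⟨a, b, hab⟩ := exists_gmul_gmul_eq c d
  have hfin : {x | gmul a (gmul x b) = c}.Finite :=
    (finite_setOf_gmul_left_eq a c).preimage' fun y _ => finite_setOf_gmul_right_eq b y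
  refine isOpen_singleton_of_finite_preimage ((hsep (some a)).1.comp (hsep (some b)).2)
    (by rwa [Function.comp_apply, gmul0, gmul0, hab]) ((hfin.image some).subset ?_)
  rintro (_ | y) hy
  · simp [gmul0] at hy
  · exact ⟨y, Option.some.inj (hy.trans (congrArg some hab)), rfl⟩

lemma isAlmostInvariant_preimage_some
    (hsep : ∀ a : Option (Gel n),
      Continuous (fun x => gmul0 a x) ∧ Continuous (fun x => gmul0 x a))
    (hiso : ∀ x : Option (Gel n), x ≠ none → IsOpen {x}) {K V : Set (Option (Gel n))}
    (hK : IsCompact K) (hVK : V ⊆ K) (hV : IsOpen V) (hnone : none ∈ V) :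
    IsAlmostInvariant (some ⁻¹' V) := by
  have key {f : Option (Gel n) → Option (Gel n)} (hf : Continuous f) (hf0 : f none = none) :
      {x | x ∈ V ∧ f x ∉ V}.Finite :=
    ((hK.diff (hV.preimage hf)).finite_of_forall_ne_isOpen_singleton hiso
      (by simp [hf0, hnone])).subset fun x hx => ⟨hVK hx.1, hx.2⟩
  intro a
  exact ⟨(key (hsep (some a)).1 (gmul0_none_right _)).preimage (Option.some_injective _).injOn,
    (key (hsep (some a)).2 rfl).preimage (Option.some_injective _).injOn⟩

/-- Corollary 1.8: in a Hausdorff locally compact non-discrete semitopological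
topology on `S⁰`, every open neighbourhood of the zero has finite
complement. -/
theorem compl_U_finite {n : ℕ} [TopologicalSpace (Option (Gel n))]
    [T2Space (Option (Gel n))] [LocallyCompactSpace (Option (Gel n))]
    (hsep : ∀ a : Option (Gel n),
      Continuous (fun x => gmul0 a x) ∧ Continuous (fun x => gmul0 x a))
    (hnd : ¬ DiscreteTopology (Option (Gel n)))
    (U : Set (Option (Gel n))) (hU : IsOpen U) (h0 : none ∈ U) :
    (Uᶜ).Finite := by
  have hiso (x : Option (Gel n)) (hx : x ≠ none) : IsOpen {x} :=
    isOpen_singleton_of_ne_none hsep hx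
  have : (nhdsWithin (none : Option (Gel n)) {none}ᶜ).NeBot := by
    rw [Filter.neBot_iff, Ne, ← isOpen_singleton_iff_punctured_nhds]
    exact fun h => hnd (discreteTopology_iff_isOpen_singleton.2 fun x =>
      if hx : x = none then hx ▸ h else hiso x hx)
  obtain ⟨K, hK, hKnhds⟩ := exists_compact_mem_nhds (none : Option (Gel n))
  have hV : IsOpen (U ∩ interior K) := hU.inter isOpen_interior
  have hnone : none ∈ U ∩ interior K := ⟨h0, mem_interior_iff_mem_nhds.2 hKnhds⟩
  have hinf : (some ⁻¹' (U ∩ interior K)).Infinite := Set.Infinite.preimage' <| by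
    rw [(Set.isCompl_range_some_none _).eq_compl, ← Set.sdiff_eq]
    exact (infinite_of_mem_nhds none (hV.mem_nhds hnone)).sdiff (Set.finite_singleton _)
  have hT := isAlmostInvariant_preimage_some hsep hiso hK
    (Set.inter_subset_right.trans interior_subset) hV hnone
  refine ((hT.compl_finite hinf).image some).subset ?_
  rintro (_ | x) hx
  exacts [absurd h0 hx, ⟨x, fun hxV => hx hxV.1, rfl⟩]
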